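/- For every n-point metric space M, the Lipschitz free space F(M) contains a subspace of dimension k = ⌊n/2⌋ that is 2-isomorphic to ℓ₁^k and 2-complemented in F(M), i.e., there is a linear projection of norm at most 2 from F(M) onto this subspace. -/
import Mathlib


open Finset

/-- The Lipschitz-free (Kantorovich–Rubinstein) norm of a molecule on a finite
metric space, expressed via duality with `1`-Lipschitz functions. -/
noncomputable def freeNorm (M : Type*) [MetricSpace M] [Fintype M] (m : M → ℝ) : ℝ :=
  sSup {r : ℝ | ∃ f : M → ℝ, LipschitzWith 1 f ∧ r = ∑ p, m p * f p}

/-- Molecules: the underlying vector space of the Lipschitz free space on a finite space;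
equipped with `freeNorm` it is the Lipschitz free space `F(M)`. -/
def molecules (M : Type*) [Fintype M] : Submodule ℝ (M → ℝ) where
  carrier := {m | ∑ p, m p = 0}
  add_mem' := by
    intro a b ha hb
    simp only [Set.mem_setOf_eq, Pi.add_apply, Finset.sum_add_distrib] at *
    rw [ha, hb]; ring
  zero_mem' := by simp
  smul_mem' := by
    intro c a ha
    simp only [Set.mem_setOf_eq, Pi.smul_apply, smul_eq_mul, ← Finset.mul_sum] at *
    rw [ha]; ring

/-- The norm of `ℓ₁^k`. -/
def l1norm {k : ℕ} (x : Fin k → ℝ) : ℝ := ∑ i, |x i|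

section Aux
variable {M : Type*} [Fintype M] [MetricSpace M]

lemma freeNorm_bddAbove (m : M → ℝ) (hm : ∑ p, m p = 0) :
    BddAbove {r : ℝ | ∃ f : M → ℝ, LipschitzWith 1 f ∧ r = ∑ p, m p * f p} := by
  rcases isEmpty_or_nonempty M with hM | hM
  · refine ⟨0, ?_⟩
    rintro r ⟨f, hf, rfl⟩
    simp
  · obtain ⟨p₀⟩ := hM
    refine ⟨∑ x, |m x| * dist x p₀, ?_⟩
    rintro r ⟨f, hf, rfl⟩
    have key : ∑ p, m p * f p = ∑ p, m p * (f p - f p₀) := by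
      simp only [mul_sub]
      rw [Finset.sum_sub_distrib, ← Finset.sum_mul, hm, zero_mul, sub_zero]
    rw [key]
    apply Finset.sum_le_sum
    intro x _
    calc m x * (f x - f p₀) ≤ |m x * (f x - f p₀)| := le_abs_self _
      _ = |m x| * |f x - f p₀| := abs_mul _ _
      _ ≤ |m x| * dist x p₀ := by
          refine mul_le_mul_of_nonneg_left ?_ (abs_nonneg _)
          have := hf.dist_le_mul x p₀
          rwa [Real.dist_eq, NNReal.coe_one, one_mul] at this

lemma zero_mem_freeNorm_set (m : M → ℝ) :
    (0:ℝ) ∈ {r : ℝ | ∃ f : M → ℝ, LipschitzWith 1 f ∧ r = ∑ p, m p * f p} := by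
  refine ⟨fun _ => 0, ?_, by simp⟩
  exact (LipschitzWith.const 0).weaken (by norm_num)

lemma le_freeNorm (m : M → ℝ) (hm : ∑ p, m p = 0) {f : M → ℝ} (hf : LipschitzWith 1 f) :
    ∑ p, m p * f p ≤ freeNorm M m :=
  le_csSup (freeNorm_bddAbove m hm) ⟨f, hf, rfl⟩

lemma freeNorm_nonneg (m : M → ℝ) (hm : ∑ p, m p = 0) : 0 ≤ freeNorm M m :=
  le_csSup (freeNorm_bddAbove m hm) (zero_mem_freeNorm_set m)

lemma freeNorm_le (m : M → ℝ) {C : ℝ} (hC : 0 ≤ C)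
    (h : ∀ f : M → ℝ, LipschitzWith 1 f → ∑ p, m p * f p ≤ C) :
    freeNorm M m ≤ C := by
  apply Real.sSup_le _ hC
  rintro r ⟨f, hf, rfl⟩
  exact h f hf

end Aux

section Bump
variable {M : Type*} [MetricSpace M]

noncomputable def bump (c : M) (r : ℝ) (x : M) : ℝ := max 0 (r - dist x c)

lemma bump_nonneg (c : M) (r : ℝ) (x : M) : 0 ≤ bump c r x := le_max_left _ _

lemma bump_eq_zero {c : M} {r : ℝ} {x : M} (h : r ≤ dist x c) : bump c r x = 0 :=
  max_eq_left (by linarith)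

lemma bump_pos_dist {c : M} {r : ℝ} {x : M} (h : bump c r x ≠ 0) : dist x c < r := by
  by_contra h'
  exact h (bump_eq_zero (not_lt.1 h'))

lemma bump_eq_of_ne {c : M} {r : ℝ} {x : M} (h : bump c r x ≠ 0) :
    bump c r x = r - dist x c := by
  have := bump_pos_dist h
  exact max_eq_right (by linarith)

lemma dist_ge_of_bump_eq_zero {c : M} {r : ℝ} {x : M} (h : bump c r x = 0) : r ≤ dist x c := by
  by_contra h'
  have : bump c r x = r - dist x c := max_eq_right (by linarith [not_le.1 h'])
  rw [h] at this
  linarith [not_le.1 h']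

lemma bump_self {c : M} {r : ℝ} (hr : 0 ≤ r) : bump c r c = r := by
  simp [bump, max_eq_right hr]

lemma bump_lipschitz (c : M) (r : ℝ) (x y : M) : |bump c r x - bump c r y| ≤ dist x y := by
  unfold bump
  simp only [max_comm (0:ℝ)]
  have h := abs_max_sub_max_le_abs (r - dist x c) (r - dist y c) 0
  refine h.trans ?_
  have he : r - dist x c - (r - dist y c) = -(dist x c - dist y c) := by ring
  rw [he, abs_neg]
  exact abs_dist_sub_le x y c

end Bump

section Lip
variable {M : Type*} [MetricSpace M]

lemma lipschitz_bumps {k : ℕ} (q : Fin k → M) (d : Fin k → ℝ)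
    (hd : ∀ i, 0 < d i)
    (hsep : ∀ i j, i ≠ j → d j ≤ dist (q i) (q j))
    (ε : Fin k → ℝ) (hε : ∀ i, |ε i| ≤ 1) :
    LipschitzWith 1 (fun x => ∑ i, ε i * bump (q i) (d i / 2) x) := by
  set F : M → ℝ := fun x => ∑ i, ε i * bump (q i) (d i / 2) x with hF
  have huniq : ∀ x (i j : Fin k), bump (q i) (d i / 2) x ≠ 0 → bump (q j) (d j / 2) x ≠ 0 → i = j := by
    intro x i j hi hj
    by_contra hij
    have h1 := bump_pos_dist hi
    have h2 := bump_pos_dist hj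
    have h3 : d j ≤ dist (q i) (q j) := hsep i j hij
    have h4 : d i ≤ dist (q j) (q i) := hsep j i (Ne.symm hij)
    have h5 : dist (q i) (q j) ≤ dist (q i) x + dist x (q j) := dist_triangle _ _ _
    rw [dist_comm (q j) (q i)] at h4
    rw [dist_comm (q i) x] at h5
    linarith
  have hFx : ∀ x (i : Fin k), bump (q i) (d i / 2) x ≠ 0 → F x = ε i * bump (q i) (d i / 2) x := by
    intro x i hi
    refine Finset.sum_eq_single i ?_ ?_
    · intro j _ hji
      rcases eq_or_ne (bump (q j) (d j / 2) x) 0 with h | h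
      · rw [h, mul_zero]
      · exact absurd (huniq x j i h hi) hji
    · intro h
      exact absurd (Finset.mem_univ i) h
  have hF0 : ∀ x, (∀ i, bump (q i) (d i / 2) x = 0) → F x = 0 := by
    intro x h
    exact Finset.sum_eq_zero fun i _ => by rw [h i, mul_zero]
  -- one-sided case
  have hone : ∀ x y (i : Fin k), bump (q i) (d i / 2) x ≠ 0 →
      (∀ j, bump (q j) (d j / 2) y = 0) → |F x - F y| ≤ dist x y := by
    intro x y i hi hy
    rw [hFx x i hi, hF0 y hy, sub_zero, abs_mul]
    have hb := bump_eq_of_ne hi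
    have hb' : d i / 2 ≤ dist y (q i) := dist_ge_of_bump_eq_zero (hy i)
    have h1 : |ε i| * |bump (q i) (d i / 2) x| ≤ 1 * |bump (q i) (d i / 2) x| :=
      mul_le_mul_of_nonneg_right (hε i) (abs_nonneg _)
    rw [one_mul] at h1
    refine h1.trans ?_
    rw [abs_of_nonneg (bump_nonneg _ _ _), hb]
    have h2 : dist y (q i) ≤ dist y x + dist x (q i) := dist_triangle _ _ _
    rw [dist_comm y x] at h2
    linarith
  have key : ∀ x y, |F x - F y| ≤ dist x y := by
    intro x y
    by_cases hx : ∃ i, bump (q i) (d i / 2) x ≠ 0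
    · obtain ⟨i, hi⟩ := hx
      by_cases hy : ∃ j, bump (q j) (d j / 2) y ≠ 0
      · obtain ⟨j, hj⟩ := hy
        rw [hFx x i hi, hFx y j hj]
        rcases eq_or_ne i j with rfl | hij
        · have h1 : ε i * bump (q i) (d i / 2) x - ε i * bump (q i) (d i / 2) y
              = ε i * (bump (q i) (d i / 2) x - bump (q i) (d i / 2) y) := by ring
          rw [h1, abs_mul]
          have h2 := mul_le_mul_of_nonneg_right (hε i)
            (abs_nonneg (bump (q i) (d i / 2) x - bump (q i) (d i / 2) y))
          rw [one_mul] at h2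
          exact h2.trans (bump_lipschitz _ _ _ _)
        · have bx := bump_eq_of_ne hi
          have by' := bump_eq_of_ne hj
          have h3 : d j ≤ dist (q i) (q j) := hsep i j hij
          have h4 : d i ≤ dist (q i) (q j) := by
            have := hsep j i (Ne.symm hij); rwa [dist_comm (q j) (q i)] at this
          have tri : dist (q i) (q j) ≤ dist (q i) x + dist x y + dist y (q j) :=
            dist_triangle4 _ _ _ _
          rw [dist_comm (q i) x] at tri
          have habs : |ε i * bump (q i) (d i / 2) x - ε j * bump (q j) (d j / 2) y|
              ≤ bump (q i) (d i / 2) x + bump (q j) (d j / 2) y := by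
            refine (abs_sub _ _).trans ?_
            rw [abs_mul, abs_mul, abs_of_nonneg (bump_nonneg _ _ _),
              abs_of_nonneg (bump_nonneg _ _ _)]
            have e1 := mul_le_mul_of_nonneg_right (hε i) (bump_nonneg (q i) (d i / 2) x)
            have e2 := mul_le_mul_of_nonneg_right (hε j) (bump_nonneg (q j) (d j / 2) y)
            linarith
          refine habs.trans ?_
          rw [bx, by']
          linarith
      · push_neg at hy
        exact hone x y i hi hy
    · push_neg at hx
      by_cases hy : ∃ j, bump (q j) (d j / 2) y ≠ 0
      · obtain ⟨j, hj⟩ := hy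
        rw [abs_sub_comm, dist_comm]
        exact hone y x j hj hx
      · push_neg at hy
        rw [hF0 x hx, hF0 y hy]
        simp [dist_nonneg]
  apply LipschitzWith.of_dist_le_mul
  intro x y
  rw [Real.dist_eq, NNReal.coe_one, one_mul]
  exact key x y

end Lip

section Maps
variable (M : Type*) [Fintype M]

lemma sum_indicator_mul [DecidableEq M] {k : ℕ} (pq q : Fin k → M) (a : Fin k → ℝ) (f : M → ℝ) :
    ∑ x, (∑ i, a i * ((if x = pq i then (1:ℝ) else 0) - if x = q i then 1 else 0)) * f x
      = ∑ i, a i * (f (pq i) - f (q i)) := by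
  simp_rw [Finset.sum_mul]
  rw [Finset.sum_comm]
  refine Finset.sum_congr rfl fun i _ => ?_
  have h : ∀ x : M, a i * ((if x = pq i then (1:ℝ) else 0) - if x = q i then 1 else 0) * f x
      = a i * ((if x = pq i then f x else 0) - (if x = q i then f x else 0)) := by
    intro x; split_ifs <;> ring
  simp_rw [h]
  rw [← Finset.mul_sum, Finset.sum_sub_distrib,
    Finset.sum_ite_eq' Finset.univ (pq i) f, Finset.sum_ite_eq' Finset.univ (q i) f]
  simp

noncomputable def Lmap [DecidableEq M] {k : ℕ} (pq q : Fin k → M) :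
    (Fin k → ℝ) →ₗ[ℝ] (M → ℝ) where
  toFun a := fun x => ∑ i, a i * ((if x = pq i then 1 else 0) - if x = q i then 1 else 0)
  map_add' a b := by
    funext x
    simp [add_mul, Finset.sum_add_distrib]
  map_smul' c a := by
    funext x
    simp [Finset.mul_sum, mul_assoc]

noncomputable def Cmap {k : ℕ} (g : Fin k → M → ℝ) (s : Fin k → ℝ) :
    (M → ℝ) →ₗ[ℝ] (Fin k → ℝ) where
  toFun m := fun i => s i * ∑ x, m x * g i x
  map_add' m1 m2 := by
    funext i
    simp [add_mul, Finset.sum_add_distrib, mul_add]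
  map_smul' c m := by
    funext i
    simp only [Pi.smul_apply, smul_eq_mul, RingHom.id_apply]
    rw [show (∑ x : M, c * m x * g i x) = c * ∑ x : M, m x * g i x by
      rw [Finset.mul_sum]; exact Finset.sum_congr rfl fun x _ => by ring]
    ring

noncomputable def Rmap {k : ℕ} (q : Fin k → M) (s : Fin k → ℝ) :
    (M → ℝ) →ₗ[ℝ] (Fin k → ℝ) where
  toFun m := fun i => s i * m (q i)
  map_add' m1 m2 := by funext i; simp [mul_add]
  map_smul' c m := by funext i; simp only [Pi.smul_apply, smul_eq_mul, RingHom.id_apply]; ring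

end Maps

section Comb
variable {M : Type*} [Fintype M] [MetricSpace M]

set_option maxHeartbeats 1000000 in
lemma exists_pairs (k : ℕ) (hk : 2 * k ≤ Fintype.card M) :
    ∃ (Q : Finset M) (p : M → M), Q.card = k ∧ (∀ q ∈ Q, p q ∉ Q) ∧
      (∀ q ∈ Q, p q ≠ q) ∧ (∀ q ∈ Q, ∀ x, x ≠ q → dist (p q) q ≤ dist x q) := by
  classical
  rcases Nat.eq_zero_or_pos k with rfl | hkpos
  · exact ⟨∅, id, by simp, by simp, by simp, by simp⟩
  have hcard2 : 2 ≤ Fintype.card M := le_trans (by omega) hk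
  set n0 := Fintype.card M with hn0
  -- erase sets are nonempty
  have herase : ∀ v : M, (Finset.univ.erase v).Nonempty := by
    intro v
    rw [← Finset.card_pos, Finset.card_erase_of_mem (Finset.mem_univ v), Finset.card_univ]
    omega
  set ordv : M → ℕ := fun v => (Fintype.equivFin M v : ℕ) with hordv
  have hord_inj : Function.Injective ordv := by
    intro a b h
    exact (Fintype.equivFin M).injective (Fin.val_injective h)
  set NNset : M → Finset M := fun v =>
    (Finset.univ.erase v).filter (fun x => ∀ y ∈ Finset.univ.erase v, dist x v ≤ dist y v)
    with hNNset
  have hNNne : ∀ v, (NNset v).Nonempty := by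
    intro v
    obtain ⟨b, hb, hmin⟩ := Finset.exists_min_image (Finset.univ.erase v) (fun x => dist x v) (herase v)
    exact ⟨b, Finset.mem_filter.2 ⟨hb, hmin⟩⟩
  have hsel : ∀ v : M, ∃ b ∈ NNset v, ∀ b' ∈ NNset v, ordv b ≤ ordv b' := fun v =>
    Finset.exists_min_image (NNset v) ordv (hNNne v)
  set p : M → M := fun v => (hsel v).choose with hp
  have hpmem : ∀ v, p v ∈ NNset v := fun v => (hsel v).choose_spec.1
  have hpord : ∀ v, ∀ b' ∈ NNset v, ordv (p v) ≤ ordv b' := fun v => (hsel v).choose_spec.2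
  have hpne : ∀ v, p v ≠ v := by
    intro v
    have := (Finset.mem_filter.1 (hpmem v)).1
    exact (Finset.mem_erase.1 this).1
  have hpNN : ∀ v, ∀ x, x ≠ v → dist (p v) v ≤ dist x v := by
    intro v x hx
    exact (Finset.mem_filter.1 (hpmem v)).2 x (Finset.mem_erase.2 ⟨hx, Finset.mem_univ x⟩)
  -- step lemma
  have hstep : ∀ v, p (p v) ≠ v →
      dist (p (p v)) (p v) < dist (p v) v ∨
      (dist (p (p v)) (p v) = dist (p v) v ∧ ordv (p (p v)) < ordv v) := by
    intro v hne
    have h1 : dist (p (p v)) (p v) ≤ dist v (p v) := hpNN (p v) v (fun h => hpne v h.symm)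
    rw [dist_comm v (p v)] at h1
    rcases lt_or_eq_of_le h1 with h | h
    · exact Or.inl h
    · right
      refine ⟨h, ?_⟩
      have hvmem : v ∈ NNset (p v) := by
        refine Finset.mem_filter.2 ⟨Finset.mem_erase.2 ⟨fun hh => hpne v hh.symm, Finset.mem_univ v⟩, ?_⟩
        intro y hy
        have := hpNN (p v) y (Finset.mem_erase.1 hy).1
        calc dist v (p v) = dist (p v) v := dist_comm _ _
          _ = dist (p (p v)) (p v) := h.symm
          _ ≤ dist y (p v) := this
      have := hpord (p v) v hvmem
      rcases lt_or_eq_of_le this with h' | h'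
      · exact h'
      · exact absurd (hord_inj h') hne
  -- measure
  set D : M → ℝ := fun v => dist (p v) v with hD
  set rk : M → ℕ := fun v => (Finset.univ.filter (fun w => D w < D v)).card with hrk
  set μ : M → ℕ := fun v => rk v * (2 * n0 + 1) + (ordv v + ordv (p v)) with hμdef
  have hord_lt : ∀ v, ordv v < n0 := fun v => (Fintype.equivFin M v).isLt
  have hμ : ∀ v, p (p v) ≠ v → μ (p v) < μ v := by
    intro v hne
    rcases hstep v hne with h | ⟨heq, hord⟩
    · -- rk (p v) < rk v
      have hsub : Finset.univ.filter (fun w => D w < D (p v)) ⊂ Finset.univ.filter (fun w => D w < D v) := by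
        refine Finset.ssubset_iff_of_subset ?_ |>.2 ?_
        · intro w hw
          refine Finset.mem_filter.2 ⟨Finset.mem_univ w, ?_⟩
          exact lt_trans (Finset.mem_filter.1 hw).2 h
        · exact ⟨p v, Finset.mem_filter.2 ⟨Finset.mem_univ _, h⟩, fun hc => lt_irrefl _ (Finset.mem_filter.1 hc).2⟩
      have hcard : rk (p v) + 1 ≤ rk v := Finset.card_lt_card hsub
      have h2 : (rk (p v) + 1) * (2 * n0 + 1) ≤ rk v * (2 * n0 + 1) :=
        Nat.mul_le_mul_right _ hcard
      have h3 := hord_lt (p v)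
      have h4 := hord_lt (p (p v))
      have h5 := hord_lt v
      rw [add_mul, one_mul] at h2
      show rk (p v) * (2 * n0 + 1) + (ordv (p v) + ordv (p (p v)))
        < rk v * (2 * n0 + 1) + (ordv v + ordv (p v))
      linarith
    · have hrkeq : rk (p v) = rk v := by
        show (Finset.univ.filter (fun w => D w < D (p v))).card
          = (Finset.univ.filter (fun w => D w < D v)).card
        have hDv : D (p v) = D v := heq
        rw [hDv]
      show rk (p v) * (2 * n0 + 1) + (ordv (p v) + ordv (p (p v)))
        < rk v * (2 * n0 + 1) + (ordv v + ordv (p v))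
      rw [hrkeq]
      omega
  -- induction
  have IND : ∀ N (S : Finset M), S.card ≤ N →
      ∃ Q ⊆ S, S.card / 2 ≤ Q.card ∧ ∀ q ∈ Q, p q ∉ Q := by
    intro N
    induction N with
    | zero =>
      intro S hS
      refine ⟨∅, Finset.empty_subset _, ?_, by simp⟩
      omega
    | succ N ih =>
      intro S hS
      rcases S.eq_empty_or_nonempty with rfl | hSne
      · exact ⟨∅, Finset.empty_subset _, by simp, by simp⟩
      obtain ⟨v, hvS, hvmax⟩ := Finset.exists_max_image S μ hSne
      set S' := (S.erase v).erase (p v) with hS'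
      have hS'sub : S' ⊆ S := fun x hx =>
        Finset.erase_subset _ _ (Finset.erase_subset _ _ hx)
      have hS'card : S'.card ≤ N := by
        have h1 : (S.erase v).card = S.card - 1 := Finset.card_erase_of_mem hvS
        have h2 : S'.card ≤ (S.erase v).card := Finset.card_le_card (Finset.erase_subset _ _)
        have h3 : 1 ≤ S.card := Finset.card_pos.2 hSne
        omega
      obtain ⟨Q', hQ'sub, hQ'card, hQ'prop⟩ := ih S' hS'card
      have hvQ' : v ∉ Q' := fun h =>
        (Finset.mem_erase.1 (Finset.erase_subset _ _ (hQ'sub h))).1 rfl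
      have hpvQ' : p v ∉ Q' := fun h => (Finset.mem_erase.1 (hQ'sub h)).1 rfl
      refine ⟨insert v Q', ?_, ?_, ?_⟩
      · refine Finset.insert_subset hvS (hQ'sub.trans hS'sub)
      · rw [Finset.card_insert_of_notMem hvQ']
        have h1 : (S.erase v).card = S.card - 1 := Finset.card_erase_of_mem hvS
        have h2 : (S.erase v).card ≤ S'.card + 1 := by
          by_cases hmem : p v ∈ S.erase v
          · simp only [hS']
            rw [Finset.card_erase_of_mem hmem]
            omega
          · simp only [hS']
            rw [Finset.erase_eq_of_notMem hmem]
            omega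
        have h3 : 1 ≤ S.card := Finset.card_pos.2 hSne
        omega
      · intro x hx
        rcases Finset.mem_insert.1 hx with rfl | hx'
        · intro hc
          rcases Finset.mem_insert.1 hc with h | h
          · exact hpne x h
          · exact hpvQ' h
        · intro hc
          rcases Finset.mem_insert.1 hc with h | h
          · -- p x = v
            rcases eq_or_ne (p (p x)) x with h2 | h2
            · rw [h] at h2
              exact (Finset.mem_erase.1 (hQ'sub hx')).1 h2.symm
            · have := hμ x h2
              rw [h] at this
              have hxS : x ∈ S := hS'sub (hQ'sub hx')
              exact absurd (hvmax x hxS) (by omega)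
          · exact hQ'prop x hx' h
  obtain ⟨Q0, _, hQ0card, hQ0prop⟩ := IND (Fintype.card M) Finset.univ (le_of_eq Finset.card_univ)
  rw [Finset.card_univ] at hQ0card
  have hkle : k ≤ Q0.card := le_trans (by omega) hQ0card
  obtain ⟨Q, hQsub, hQcard⟩ := Finset.exists_subset_card_eq hkle
  refine ⟨Q, p, hQcard, ?_, fun q _ => hpne q, fun q _ x hx => hpNN q x hx⟩
  intro q hq hc
  exact hQ0prop q (hQsub hq) (hQsub hc)
end Comb

/-- for every `n`-point metric space `M`, the free space `F(M)` contains a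
`2`-complemented subspace `2`-isomorphic to `ℓ₁^⌊n/2⌋`. -/
theorem stmt4 {M : Type*} [Fintype M] [MetricSpace M] (n : ℕ) (hn : Fintype.card M = n) :
    ∃ Y : Submodule ℝ (M → ℝ), Y ≤ molecules M ∧
      (∃ T : Y ≃ₗ[ℝ] (Fin (n / 2) → ℝ),
        ∀ y : Y, l1norm (T y) ≤ freeNorm M y ∧ freeNorm M y ≤ 2 * l1norm (T y)) ∧
      (∃ P : (M → ℝ) →ₗ[ℝ] (M → ℝ),
        (∀ m ∈ molecules M, P m ∈ Y) ∧ (∀ y ∈ Y, P y = y) ∧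
        ∀ m ∈ molecules M, freeNorm M (P m) ≤ 2 * freeNorm M m) := by
  classical
  obtain ⟨Q, p, hQcard, hpQ, hpne, hNN⟩ := exists_pairs (n / 2) (by rw [hn]; omega)
  set e := Q.equivFinOfCardEq hQcard with he
  set q : Fin (n / 2) → M := fun i => (e.symm i).1 with hq
  have hqQ : ∀ i, q i ∈ Q := fun i => (e.symm i).2
  have hq_inj : Function.Injective q := by
    intro i j h
    exact e.symm.injective (Subtype.ext h)
  set pq : Fin (n / 2) → M := fun i => p (q i) with hpq
  set d : Fin (n / 2) → ℝ := fun i => dist (pq i) (q i) with hd0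
  have hdd : ∀ i, d i = dist (pq i) (q i) := fun _ => rfl
  have hpq_ne_q : ∀ i j, pq i ≠ q j := fun i j h =>
    hpQ (q i) (hqQ i) (by rw [show p (q i) = q j from h]; exact hqQ j)
  have hd : ∀ i, 0 < d i := fun i => by rw [hdd]; exact dist_pos.2 (hpq_ne_q i i)
  have hNN' : ∀ i x, x ≠ q i → d i ≤ dist x (q i) := fun i x hx => hNN (q i) (hqQ i) x hx
  have hsep : ∀ i j, i ≠ j → d j ≤ dist (q i) (q j) := fun i j hij =>
    hNN' j (q i) (fun h => hij (hq_inj h))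
  set L := Lmap M pq q with hL
  set Y := LinearMap.range L with hY
  have hsumL : ∀ a (f : M → ℝ), ∑ x, L a x * f x = ∑ i, a i * (f (pq i) - f (q i)) :=
    fun a f => sum_indicator_mul M pq q a f
  have hLq : ∀ a j, L a (q j) = -a j := by
    intro a j
    show (∑ i, a i * ((if q j = pq i then (1:ℝ) else 0) - if q j = q i then 1 else 0)) = -a j
    refine (Finset.sum_eq_single j ?_ ?_).trans ?_
    · intro i _ hij
      rw [if_neg (Ne.symm (hpq_ne_q i j)), if_neg (fun h => hij (hq_inj h).symm)]
      ring
    · intro h; exact absurd (Finset.mem_univ j) h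
    · rw [if_neg (Ne.symm (hpq_ne_q j j)), if_pos rfl]; ring
  have hmol : ∀ a, L a ∈ molecules M := by
    intro a
    show ∑ x, L a x = 0
    have h := hsumL a (fun _ => 1)
    simpa using h
  have hupper : ∀ a, freeNorm M (L a) ≤ ∑ i, |a i| * d i := by
    intro a
    refine freeNorm_le _ (Finset.sum_nonneg fun i _ => mul_nonneg (abs_nonneg _)
      (le_of_lt (hd i))) ?_
    intro f hf
    rw [hsumL a f]
    refine Finset.sum_le_sum fun i _ => ?_
    calc a i * (f (pq i) - f (q i)) ≤ |a i * (f (pq i) - f (q i))| := le_abs_self _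
      _ = |a i| * |f (pq i) - f (q i)| := abs_mul _ _
      _ ≤ |a i| * d i := by
          refine mul_le_mul_of_nonneg_left ?_ (abs_nonneg _)
          have h := hf.dist_le_mul (pq i) (q i)
          rw [Real.dist_eq, NNReal.coe_one, one_mul] at h
          rw [hdd i]
          exact h
  have hbump_pq : ∀ i j, bump (q i) (d i / 2) (pq j) = 0 := by
    intro i j
    apply bump_eq_zero
    rcases eq_or_ne j i with rfl | hij
    · rw [← hdd j]; linarith [hd j]
    · have h := hNN' i (pq j) (hpq_ne_q j i)
      linarith [hd i]
  have hbump_q : ∀ i j, bump (q i) (d i / 2) (q j) = if j = i then d i / 2 else 0 := by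
    intro i j
    rcases eq_or_ne j i with rfl | hij
    · rw [if_pos rfl]
      exact bump_self (by linarith [hd j])
    · rw [if_neg hij]
      apply bump_eq_zero
      have h := hNN' i (q j) (fun h => hij (hq_inj h))
      linarith [hd i]
  -- lower bound
  have hlower : ∀ a, (∑ i, |a i| * (d i / 2)) ≤ freeNorm M (L a) := by
    intro a
    set ε : Fin (n / 2) → ℝ := fun i => if 0 ≤ a i then -1 else 1 with hε
    have hε1 : ∀ i, |ε i| ≤ 1 := by
      intro i; simp only [hε]; split_ifs <;> norm_num
    have hlip := lipschitz_bumps q d hd hsep ε hε1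
    have h1 : (∑ x, L a x * (∑ j, ε j * bump (q j) (d j / 2) x)) ≤ freeNorm M (L a) := by
      have h2 := le_freeNorm (L a) (hmol a) hlip
      exact h2
    rw [hsumL] at h1
    refine le_trans (le_of_eq ?_) h1
    refine Finset.sum_congr rfl fun i _ => ?_
    have e1 : (∑ j, ε j * bump (q j) (d j / 2) (pq i)) = 0 :=
      Finset.sum_eq_zero fun j _ => by rw [hbump_pq j i, mul_zero]
    have e2 : (∑ j, ε j * bump (q j) (d j / 2) (q i)) = ε i * (d i / 2) := by
      refine (Finset.sum_eq_single i ?_ ?_).trans ?_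
      · intro j _ hji
        rw [hbump_q j i, if_neg (fun h => hji h.symm), mul_zero]
      · intro h; exact absurd (Finset.mem_univ i) h
      · rw [hbump_q i i, if_pos rfl]
    rw [e1, e2]
    simp only [hε]
    split_ifs with h
    · rw [abs_of_nonneg h]; ring
    · rw [abs_of_neg (not_le.1 h)]; ring
  -- the isomorphism
  set T0 : Y →ₗ[ℝ] (Fin (n / 2) → ℝ) := (Rmap M q (fun i => -(d i) / 2)).comp Y.subtype
    with hT0
  have hT0apply : ∀ (a : Fin (n / 2) → ℝ) (h : L a ∈ Y),
      T0 ⟨L a, h⟩ = fun i => a i * (d i / 2) := by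
    intro a h
    funext i
    show (-(d i) / 2) * (L a (q i)) = a i * (d i / 2)
    rw [hLq a i]; ring
  have hbij : Function.Bijective T0 := by
    constructor
    · rw [injective_iff_map_eq_zero]
      intro y hy
      obtain ⟨a, ha⟩ := LinearMap.mem_range.1 y.2
      have hy' : y = ⟨L a, LinearMap.mem_range_self L a⟩ := Subtype.ext ha.symm
      rw [hy', hT0apply] at hy
      have ha0 : a = 0 := by
        funext i
        have h := congrFun hy i
        simp only [Pi.zero_apply] at h
        rcases mul_eq_zero.1 h with h' | h'
        · exact h'
        · exfalso; have := hd i; linarith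
      subst ha0
      rw [hy']
      exact Subtype.ext (by simp)
    · intro b
      refine ⟨⟨L (fun i => b i * 2 / d i), LinearMap.mem_range_self _ _⟩, ?_⟩
      rw [hT0apply]
      funext i
      have hne := (hd i).ne'
      field_simp
  set T : Y ≃ₗ[ℝ] (Fin (n / 2) → ℝ) := LinearEquiv.ofBijective T0 hbij with hT
  refine ⟨Y, ?_, ⟨T, ?_⟩, ?_⟩
  · rintro m hm
    obtain ⟨a, ha⟩ := LinearMap.mem_range.1 hm
    rw [← ha]
    exact hmol a
  · -- norm estimates
    intro y
    obtain ⟨a, ha⟩ := LinearMap.mem_range.1 y.2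
    have hy' : y = ⟨L a, LinearMap.mem_range_self L a⟩ := Subtype.ext ha.symm
    have hTy : T y = fun i => a i * (d i / 2) := by
      rw [hT]
      show T0 y = _
      rw [hy', hT0apply]
    have hl1 : l1norm (T y) = ∑ i, |a i| * (d i / 2) := by
      rw [hTy]
      refine Finset.sum_congr rfl fun i _ => ?_
      rw [abs_mul, abs_of_nonneg (by linarith [hd i] : (0:ℝ) ≤ d i / 2)]
    have hcoe : (y : M → ℝ) = L a := ha.symm
    constructor
    · rw [hl1, hcoe]
      exact hlower a
    · rw [hl1, hcoe]
      refine le_trans (hupper a) (le_of_eq ?_)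
      rw [Finset.mul_sum]
      refine Finset.sum_congr rfl fun i _ => by ring
  · -- the projection
    set g : Fin (n / 2) → M → ℝ := fun i => bump (q i) (d i / 2) with hg
    set c : (M → ℝ) →ₗ[ℝ] (Fin (n / 2) → ℝ) := Cmap M g (fun i => -2 / d i) with hc
    have hcapply : ∀ m i, c m i = (-2 / d i) * ∑ x, m x * g i x := fun m i => rfl
    have hcL : ∀ a, c (L a) = a := by
      intro a
      funext i
      rw [hcapply]
      rw [hsumL a (g i)]
      have h2 : (∑ j, a j * (g i (pq j) - g i (q j))) = a i * (0 - d i / 2) := by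
        refine (Finset.sum_eq_single i ?_ ?_).trans ?_
        · intro j _ hji
          simp only [hg]
          rw [hbump_pq i j, hbump_q i j, if_neg (fun h => hji h)]
          ring
        · intro h; exact absurd (Finset.mem_univ i) h
        · simp only [hg]
          rw [hbump_pq i i, hbump_q i i, if_pos rfl]
      rw [h2]
      have hne := (hd i).ne'
      field_simp
      ring
    refine ⟨L.comp c, ?_, ?_, ?_⟩
    · intro m _
      exact ⟨c m, rfl⟩
    · intro y hy
      obtain ⟨a, ha⟩ := LinearMap.mem_range.1 hy
      rw [← ha]
      show L (c (L a)) = L a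
      rw [hcL]
    · intro m hm
      have hmm : ∑ x, m x = 0 := hm
      have h1 : freeNorm M ((L.comp c) m) ≤ ∑ i, |c m i| * d i := hupper (c m)
      set s : Fin (n / 2) → ℝ := fun i => ∑ x, m x * g i x with hs
      have h2 : ∀ i, |c m i| * d i = 2 * |s i| := by
        intro i
        rw [hcapply]
        rw [abs_mul, abs_div, abs_neg, abs_two, abs_of_pos (hd i)]
        have hne := (hd i).ne'
        field_simp
        try ring
      set ε : Fin (n / 2) → ℝ := fun i => if 0 ≤ s i then 1 else -1 with hε
      have hε1 : ∀ i, |ε i| ≤ 1 := by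
        intro i; simp only [hε]; split_ifs <;> norm_num
      have h3 : ∀ i, |s i| = ε i * s i := by
        intro i
        simp only [hε]
        split_ifs with h
        · rw [abs_of_nonneg h, one_mul]
        · rw [abs_of_neg (not_le.1 h)]; ring
      have h4 : (∑ i, ε i * s i) = ∑ x, m x * (∑ i, ε i * bump (q i) (d i / 2) x) := by
        have : ∀ i, ε i * s i = ∑ x, ε i * (m x * g i x) := by
          intro i
          rw [hs, Finset.mul_sum]
        simp_rw [this]
        rw [Finset.sum_comm]
        refine Finset.sum_congr rfl fun x _ => ?_
        rw [Finset.mul_sum]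
        refine Finset.sum_congr rfl fun i _ => ?_
        simp only [hg]
        ring
      have h5 : (∑ x, m x * (∑ i, ε i * bump (q i) (d i / 2) x)) ≤ freeNorm M m :=
        le_freeNorm m hmm (lipschitz_bumps q d hd hsep ε hε1)
      calc freeNorm M ((L.comp c) m) ≤ ∑ i, |c m i| * d i := h1
        _ = 2 * ∑ i, ε i * s i := by
            rw [Finset.mul_sum]
            refine Finset.sum_congr rfl fun i _ => ?_
            rw [h2 i, h3 i]
        _ = 2 * ∑ x, m x * (∑ i, ε i * bump (q i) (d i / 2) x) := by rw [h4]
        _ ≤ 2 * freeNorm M m := by linarith
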